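/- arXiv:2601.22311 — 4 statements merged into one kernel-verified Lean document; each statement's English description precedes it below -/
import Mathlib

section
/- For every natural number B, every natural number H ≥ 2, and every real number M > 0, there exist a finite state type S, a finite nonempty action type A, a transition function T : S → A → S, a reward function r : S → A → ℝ, a score function u : S → A → ℝ, an initial state s₀ : S, and a distinguished action g : A, such that: (i) every policy π with π(s₀) = g has H-step return R_H(π, s₀) = M, and M is the maximum H-step return over all policies; (ii) every policy π with π(s₀) ≠ g has H-step return R_H(π, s₀) = 0; (iii) there exist B + 1 pairwise distinct actions a₁, …, a_{B+1} with u(s₀, a_j) > u(s₀, g) for every j; and consequently (iv) for every finite set K of actions with |K| ≤ B satisfying the top-ranking property that u(s₀, a) ≥ u(s₀, a') for all a ∈ K and all a' ∉ K, one has g ∉ K, so every policy whose first action lies in K attains H-step return 0 while the optimal return is M. -/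
def traj {S A : Type*} (T : S → A → S) (π : S → A) (s₀ : S) : ℕ → S
  | 0 => s₀
  | t + 1 => T (traj T π s₀ t) (π (traj T π s₀ t))

noncomputable def ret {S A : Type*} (T : S → A → S) (r : S → A → ℝ)
    (π : S → A) (s₀ : S) (H : ℕ) : ℝ :=
  ∑ t ∈ Finset.range H, r (traj T π s₀ t) (π (traj T π s₀ t))

lemma ret_aux {A : Type*} (r : Bool → A → ℝ) (hr : ∀ a, r true a = 0)
    (π : Bool → A) (H : ℕ) (hH : 1 ≤ H) :
    ret (fun _ _ => true) r π false H = r false (π false) := by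
  have htraj : ∀ t, traj (S := Bool) (fun _ _ => true) π false t = if t = 0 then false else true := by
    intro t; cases t with
    | zero => rfl
    | succ n => rfl
  unfold ret
  rw [Finset.sum_eq_single_of_mem 0 (Finset.mem_range.mpr hH)]
  · rw [htraj 0]; simp
  · intro t _ ht
    rw [htraj t]; simp [ht, hr]

/-- **Beam search of bounded width prunes the unique optimal first action.**
For every beam width `B`, horizon `H ≥ 2`, and `M > 0`, there is a finite deterministic
environment with score function `u`, initial state `s₀`, and distinguished action `g` such that:
(i) every policy taking `g` at `s₀` attains return `M`, which is the maximum return over all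
policies; (ii) every policy whose first action differs from `g` attains return `0`;
(iii) there are `B + 1` pairwise distinct actions strictly outscoring `g` under `u(s₀, ·)`;
and (iv) every top-ranked retained set `K` of at most `B` actions excludes `g`, so every
policy whose first action lies in `K` attains return `0` while the optimum is `M`. -/
theorem beam_search_prunes_optimal :
    ∀ B H : ℕ, 2 ≤ H → ∀ M : ℝ, 0 < M →
    ∃ (S A : Type) (_ : Fintype S) (_ : Fintype A) (_ : Nonempty A)
      (T : S → A → S) (r : S → A → ℝ) (u : S → A → ℝ) (s₀ : S) (g : A),
      (∀ π : S → A, π s₀ = g → ret T r π s₀ H = M) ∧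
      (∀ π : S → A, ret T r π s₀ H ≤ M) ∧
      (∀ π : S → A, π s₀ ≠ g → ret T r π s₀ H = 0) ∧
      (∃ d : Fin (B + 1) → A, Function.Injective d ∧ ∀ j, u s₀ g < u s₀ (d j)) ∧
      (∀ K : Finset A, K.card ≤ B →
        (∀ a ∈ K, ∀ a' ∉ K, u s₀ a' ≤ u s₀ a) →
        g ∉ K ∧ ∀ π : S → A, π s₀ ∈ K → ret T r π s₀ H = 0) := by
  intro B H hH M hM
  set r : Bool → Fin (B + 2) → ℝ := fun s a => if s = false ∧ a = 0 then M else 0 with hr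
  have hr0 : ∀ a, r true a = 0 := by intro a; simp [hr]
  have hret : ∀ π : Bool → Fin (B + 2), ret (fun _ _ => true) r π false H
      = if π false = 0 then M else 0 := by
    intro π
    rw [ret_aux r hr0 π H (by omega)]
    by_cases h : π false = 0 <;> simp [hr, h]
  refine ⟨Bool, Fin (B + 2), inferInstance, inferInstance, inferInstance,
    (fun _ _ => true), r, (fun _ a => (a : ℝ)), false, 0, ?_, ?_, ?_, ?_, ?_⟩
  · intro π h; rw [hret, if_pos h]
  · intro π; rw [hret]; split <;> [exact le_refl M; linarith]
  · intro π h; rw [hret, if_neg h]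
  · refine ⟨fun j => ⟨j + 1, by omega⟩, ?_, ?_⟩
    · intro i j hij
      have : (i : ℕ) + 1 = (j : ℕ) + 1 := congrArg Fin.val hij
      exact Fin.ext (by omega)
    · intro j; simp; positivity
  · intro K hK htop
    have hg : (0 : Fin (B + 2)) ∉ K := by
      intro h0
      -- there is a' ∉ K with a' ≠ 0
      have hcard : K.card < Fintype.card (Fin (B + 2)) := by
        simp [Fintype.card_fin]; omega
      have : ∃ a' : Fin (B + 2), a' ∉ K ∧ a' ≠ 0 := by
        by_contra hc
        push_neg at hc
        have hsub : (Finset.univ : Finset (Fin (B + 2))) ⊆ K ∪ {0} := by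
          intro a _
          by_cases ha : a ∈ K
          · exact Finset.mem_union_left _ ha
          · simp [hc a ha]
        have := Finset.card_le_card hsub
        have h2 := Finset.card_union_le K ({0} : Finset (Fin (B + 2)))
        simp only [Finset.card_univ, Fintype.card_fin, Finset.card_singleton] at this h2
        omega
      obtain ⟨a', ha'K, ha'0⟩ := this
      have h1 := htop 0 h0 a' ha'K
      simp only at h1
      have hle : (a' : ℕ) ≤ ((0 : Fin (B + 2)) : ℕ) := by exact_mod_cast h1
      have h0v : ((0 : Fin (B + 2)) : ℕ) = 0 := rfl
      exact ha'0 (Fin.ext (by omega))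
    refine ⟨hg, fun π hπ => ?_⟩
    rw [hret, if_neg fun h => hg (by rw [h] at hπ; exact hπ)]
end

section
/- For every natural number H ≥ 2 and every real number M > 0, there exist a finite state type S, a finite nonempty action type A, a transition function T : S → A → S, a reward function r : S → A → ℝ, a score function u : S → A → ℝ, and an initial state s₀ : S, such that: (i) every u-greedy policy π : S → A has H-step return R_H(π, s₀) = 0; (ii) every one-step lookahead policy π_L : S → A has H-step return R_H(π_L, s₀) = M; and (iii) M is the maximum H-step return over all policies from s₀. Consequently, one-step lookahead strictly dominates step-wise greedy decision-making in worst-case performance, with a separation of size M that can be made arbitrarily large. -/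
/-- One-step lookahead value: `V₁(s, a) = r(s, a) + max_{a'} r(T(s, a), a')`. -/
noncomputable def lookahead1 {S A : Type*} [Fintype A] [Nonempty A]
    (T : S → A → S) (r : S → A → ℝ) (s : S) (a : A) : ℝ :=
  r s a + Finset.univ.sup' Finset.univ_nonempty (fun a' => r (T s a) a')

/-!
The environment has three states `start → good → sink`. The only reward, `M`, is collected by
acting `true` in `good`, one step after `start`; acting `false` in `start` skips `good`. A
myopic score that prefers `false` in `start` therefore earns nothing, whereas one step of
lookahead sees the reward in `good` and collects it. Every policy is in the absorbing,
reward-free state `sink` from time `2` on, so `M` is also the best possible return.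
-/

section Absorbing

variable {S A : Type*} {T : S → A → S} {r : S → A → ℝ} {π : S → A} {s₀ z : S}
  {k n : ℕ}

theorem traj_eq_of_absorbing (hT : ∀ a, T z a = z) (hk : traj T π s₀ k = z) (hkn : k ≤ n) :
    traj T π s₀ n = z := by
  induction n, hkn using Nat.le_induction with
  | base => exact hk
  | succ n _ ih => rw [traj, ih, hT]

theorem ret_eq_of_absorbing (hT : ∀ a, T z a = z) (hr : ∀ a, r z a = 0)
    (hk : traj T π s₀ k = z) (hkn : k ≤ n) : ret T r π s₀ n = ret T r π s₀ k := by
  induction n, hkn using Nat.le_induction with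
  | base => rfl
  | succ n hkn ih =>
    rw [ret, Finset.sum_range_succ, ← ret, ih, traj_eq_of_absorbing hT hk hkn, hr, add_zero]

theorem ret_two :
    ret T r π s₀ 2 = r s₀ (π s₀) + r (T s₀ (π s₀)) (π (T s₀ (π s₀))) := by
  simp [ret, Finset.sum_range_succ, traj]

end Absorbing

theorem Bool.eq_of_apply_le_apply {α : Type*} [LinearOrder α] {f : Bool → α} {b c : Bool}
    (hlt : f (!b) < f b) (hle : f b ≤ f c) : c = b := by
  cases b <;> cases c <;> first | rfl | exact absurd hle (not_le.2 hlt)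

namespace DelayedReward

inductive State : Type
  | start | good | sink
  deriving DecidableEq

open State

instance : Fintype State :=
  ⟨{start, good, sink}, fun s => by cases s <;> simp⟩

def transition : State → Bool → State
  | start, true => good
  | _, _ => sink

noncomputable def reward (M : ℝ) : State → Bool → ℝ
  | good, true => M
  | _, _ => 0

def score : State → Bool → ℝ
  | start, false => 1
  | _, _ => 0

variable {M : ℝ}

@[simp] theorem transition_start_true : transition start true = good := rfl

@[simp] theorem transition_start_false : transition start false = sink := rfl

@[simp] theorem transition_good (a : Bool) : transition good a = sink := by cases a <;> rfl

@[simp] theorem transition_sink (a : Bool) : transition sink a = sink := by cases a <;> rfl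

@[simp] theorem reward_good_true : reward M good true = M := rfl

@[simp] theorem reward_good_false : reward M good false = 0 := rfl

@[simp] theorem reward_start (a : Bool) : reward M start a = 0 := by cases a <;> rfl

@[simp] theorem reward_sink (a : Bool) : reward M sink a = 0 := by cases a <;> rfl

theorem reward_le (hM : 0 ≤ M) (s : State) (a : Bool) : reward M s a ≤ M := by
  cases s <;> cases a <;> simp [reward, hM]

theorem transition_transition (s : State) (a b : Bool) : transition (transition s a) b = sink := by
  cases s <;> cases a <;> simp [transition]

theorem ret_eq_reward_transition_start {H : ℕ} (hH : 2 ≤ H) (π : State → Bool) :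
    ret transition (reward M) π start H =
      reward M (transition start (π start)) (π (transition start (π start))) := by
  rw [ret_eq_of_absorbing (k := 2) transition_sink reward_sink (transition_transition _ _ _) hH,
    ret_two, reward_start, zero_add]

theorem lookahead1_start (hM : 0 ≤ M) (a : Bool) :
    lookahead1 transition (reward M) start a = if a then M else 0 := by
  cases a <;> simp [lookahead1, Fintype.univ_bool, hM]

theorem lookahead1_good (a : Bool) :
    lookahead1 transition (reward M) good a = if a then M else 0 := by
  cases a <;> simp [lookahead1]

end DelayedReward

open DelayedReward State in
/-- **Even one-step lookahead strictly dominates step-wise greedy decision making.**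
For every horizon `H ≥ 2` and every `M > 0`, there is a finite deterministic environment
with score function `u` and initial state `s₀` such that every `u`-greedy policy attains
`H`-step return `0`, every one-step lookahead policy attains return `M`, and `M` is the
maximum return over all policies; the separation `M` is arbitrarily large. -/
theorem one_step_lookahead_dominates_greedy :
    ∀ H : ℕ, 2 ≤ H → ∀ M : ℝ, 0 < M →
    ∃ (S A : Type) (_ : Fintype S) (iA : Fintype A) (nA : Nonempty A)
      (T : S → A → S) (r : S → A → ℝ) (u : S → A → ℝ) (s₀ : S),
      (∀ π : S → A, (∀ s a, u s a ≤ u s (π s)) → ret T r π s₀ H = 0) ∧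
      (∀ πL : S → A,
        (∀ s a, @lookahead1 S A iA nA T r s a ≤ @lookahead1 S A iA nA T r s (πL s)) →
        ret T r πL s₀ H = M) ∧
      (∀ π : S → A, ret T r π s₀ H ≤ M) := by
  intro H hH M hM
  refine ⟨State, Bool, inferInstance, inferInstance, inferInstance,
    transition, reward M, score, start, fun π hπ => ?_, fun π hπ => ?_, fun π => ?_⟩
  · have h_start : π start = false :=
      Bool.eq_of_apply_le_apply (by norm_num [score]) (hπ start false)
    rw [ret_eq_reward_transition_start hH, h_start, transition_start_false, reward_sink]
  · have h_start : π start = true := Bool.eq_of_apply_le_apply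
      (by simpa [lookahead1_start hM.le] using hM) (hπ start true)
    have h_good : π good = true := Bool.eq_of_apply_le_apply
      (by simpa [lookahead1_good] using hM) (hπ good true)
    rw [ret_eq_reward_transition_start hH, h_start, transition_start_true, h_good,
      reward_good_true]
  · rw [ret_eq_reward_transition_start hH]
    exact reward_le hM.le _ _
end

section
/- For every natural number H, every natural number k with 1 ≤ k ≤ H − 1, and every real number R_max > 0, there exist a finite state type S, a finite nonempty action type A, a transition function T : S → A → S, a reward function r : S → A → ℝ, a score function u : S → A → ℝ, and an initial state s₀ : S, such that: (i) |r(s, a)| ≤ R_max for every state s and action a; (ii) every k-lookahead policy π_k with u-tiebreaking has H-step return R_H(π_k, s₀) = 0; and (iii) there exists a policy π* with H-step return R_H(π*, s₀) ≥ R_max · ⌊(H − 1)/(k + 1)⌋. Consequently, the additive suboptimality gap max_π R_H(π, s₀) − R_H(π_k, s₀) of the truncated k-lookahead policy is at least R_max · ⌊(H − 1)/(k + 1)⌋, growing linearly in the ratio H/(k + 1). -/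
/-- Truncated lookahead value: `Q̃_0 ≡ 0`, and
`Q̃_{j+1}(s, a) = r(s, a) + max_{a'} Q̃_j(T(s, a), a')`;
in particular `Q̃_1 = r`, and all rewards beyond the lookahead depth are treated as zero. -/
noncomputable def Qtil {S A : Type*} [Fintype A] [Nonempty A]
    (T : S → A → S) (r : S → A → ℝ) : ℕ → S → A → ℝ
  | 0 => fun _ _ => 0
  | j + 1 => fun s a =>
      r s a + Finset.univ.sup' Finset.univ_nonempty (fun a' => Qtil T r j (T s a) a')

/-! A reward lying `k` steps ahead is invisible to `k`-step lookahead. On a cycle of length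
`k + 1` whose only rewarding state is `k`, every action at `0` therefore has lookahead value `0`,
and breaking ties towards standing still keeps the policy at `0` forever. Going round the cycle
instead collects the reward at every time `t ≡ k [MOD k + 1]`, at least `⌊(H - 1)/(k + 1)⌋` times
in `H` steps. -/

section Lookahead

variable {S A : Type*} [Fintype A] [Nonempty A] {T : S → A → S} {r : S → A → ℝ}

/-- `d` is a lower bound on the number of steps needed to reach a rewarding state. -/
theorem Qtil_eq_zero_of_le (d : S → ℕ) (hd : ∀ s a, d s ≤ d (T s a) + 1)
    (hr : ∀ s a, d s ≠ 0 → r s a = 0) :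
    ∀ j s a, j ≤ d s → Qtil T r j s a = 0
  | 0, _, _, _ => rfl
  | j + 1, s, a, hj => by
    have hnext : ∀ a', Qtil T r j (T s a) a' = 0 :=
      fun a' => Qtil_eq_zero_of_le d hd hr j (T s a) a' (by linarith [hd s a])
    simp only [Qtil, hr s a (by omega), hnext, Finset.sup'_const, add_zero]

end Lookahead

section Trajectory

variable {S A : Type*} {T : S → A → S} {π : S → A} {s₀ : S}

theorem traj_eq_of_fixed (h : T s₀ (π s₀) = s₀) (t : ℕ) : traj T π s₀ t = s₀ := by
  induction t with
  | zero => rfl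
  | succ t ih => rw [traj, ih, h]

theorem ret_eq_of_fixed (r : S → A → ℝ) (h : T s₀ (π s₀) = s₀) (H : ℕ) :
    ret T r π s₀ H = H * r s₀ (π s₀) := by
  simp [ret, traj_eq_of_fixed h]

theorem traj_eq_natCast [AddMonoidWithOne S] (h : ∀ s, T s (π s) = s + 1) (t : ℕ) :
    traj T π 0 t = t := by
  induction t with
  | zero => simp [traj]
  | succ t ih => rw [traj, h, ih, Nat.cast_succ]

end Trajectory

namespace Cycle

def step (k : ℕ) (s : ZMod (k + 1)) (advance : Bool) : ZMod (k + 1) :=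
  if advance then s + 1 else s

noncomputable def reward (k : ℕ) (R : ℝ) (s : ZMod (k + 1)) (_ : Bool) : ℝ :=
  if s = k then R else 0

theorem abs_reward_le {k : ℕ} {R : ℝ} (hR : 0 ≤ R) (s : ZMod (k + 1)) (a : Bool) :
    |reward k R s a| ≤ R := by
  unfold reward
  split_ifs <;> simp [abs_of_nonneg hR, hR]

theorem Qtil_zero_eq_zero (k : ℕ) (R : ℝ) (a : Bool) : Qtil (step k) (reward k R) k 0 a = 0 := by
  refine Qtil_eq_zero_of_le (fun s => k - s.val) (fun s a => ?_) (fun s a hs => ?_) k 0 a (by simp)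
  · have hstep : (step k s a).val ≤ s.val + 1 := by
      rcases a with _ | _
      · exact s.val.le_succ
      · exact (ZMod.val_add_le s 1).trans (by simp [ZMod.val_one_eq_one_mod, Nat.mod_le])
    omega
  · have hk : ((k : ℕ) : ZMod (k + 1)).val = k := ZMod.val_natCast_of_lt k.lt_succ_self
    have : s ≠ k := fun h => hs (by simp [h, hk])
    simp [reward, this]

theorem ret_stay (k : ℕ) (hk : 1 ≤ k) (R : ℝ) {π : ZMod (k + 1) → Bool} (hπ : π 0 = false)
    (H : ℕ) : ret (step k) (reward k R) π 0 H = 0 := by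
  have hzero : (0 : ZMod (k + 1)) ≠ k := by
    rw [← Nat.cast_zero, Ne, ZMod.natCast_eq_natCast_iff', Nat.zero_mod,
      Nat.mod_eq_of_lt k.lt_succ_self]
    omega
  rw [ret_eq_of_fixed _ (by simp [step, hπ])]
  simp [reward, hzero]

theorem ret_advance (k : ℕ) (R : ℝ) (H : ℕ) :
    ret (step k) (reward k R) (fun _ => true) 0 H = Nat.count (· ≡ k [MOD k + 1]) H * R := by
  simp only [ret, traj_eq_natCast (T := step k) (fun _ => if_pos rfl), reward,
    ZMod.natCast_eq_natCast_iff, ← Finset.sum_filter, Finset.sum_const, nsmul_eq_mul,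
    Nat.count_eq_card_filter_range]

end Cycle

open Cycle in
/-- **Worst-case suboptimality of truncated `k`-lookahead.**
For every horizon `H`, every lookahead depth `k` with `1 ≤ k ≤ H - 1`, and every
`R_max > 0`, there is a finite deterministic environment with all rewards bounded by
`R_max` in magnitude such that every `k`-lookahead policy with `u`-tiebreaking attains
`H`-step return `0`, while some policy attains return at least
`R_max ⌊(H - 1)/(k + 1)⌋`; hence the suboptimality gap of truncated lookahead grows
linearly in `H / (k + 1)`. -/
theorem truncated_lookahead_suboptimality :
    ∀ H k : ℕ, 1 ≤ k → k ≤ H - 1 → ∀ Rmax : ℝ, 0 < Rmax →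
    ∃ (S A : Type) (_ : Fintype S) (iA : Fintype A) (nA : Nonempty A)
      (T : S → A → S) (r : S → A → ℝ) (u : S → A → ℝ) (s₀ : S),
      (∀ s a, |r s a| ≤ Rmax) ∧
      (∀ πk : S → A,
        (∀ s a, @Qtil S A iA nA T r k s a ≤ @Qtil S A iA nA T r k s (πk s) ∧
          (@Qtil S A iA nA T r k s a = @Qtil S A iA nA T r k s (πk s) →
            u s a ≤ u s (πk s))) →
        ret T r πk s₀ H = 0) ∧
      (∃ π' : S → A, Rmax * (((H - 1) / (k + 1) : ℕ) : ℝ) ≤ ret T r π' s₀ H) := by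
  intro H k hk _ Rmax hR
  refine ⟨ZMod (k + 1), Bool, inferInstance, inferInstance, inferInstance, step k, reward k Rmax,
    fun _ advance => if advance then 0 else 1, 0, abs_reward_le hR.le, fun π hπ => ?_,
    ⟨fun _ => true, ?_⟩⟩
  · have hstay : π 0 = false := by
      have htie := (hπ 0 false).2 (by rw [Qtil_zero_eq_zero, Qtil_zero_eq_zero])
      revert htie
      cases π 0 <;> simp
    exact ret_stay k hk Rmax hstay H
  · have hcount : (H - 1) / (k + 1) ≤ Nat.count (· ≡ k [MOD k + 1]) H := by
      rw [Nat.count_modEq_card H k.succ_pos]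
      exact (Nat.div_le_div_right (Nat.sub_le H 1)).trans (Nat.le_add_right _ _)
    rw [ret_advance, mul_comm]
    gcongr
end

section
/- For every natural number H, every natural number k with 1 ≤ k ≤ H − 1, and every real number R_max > 0, there exist a finite state type S, a finite nonempty action type A, a transition function T : S → A → S, a reward function r : S → A → ℝ, a score function u : S → A → ℝ, and an initial state s₀ : S, with |r(s, a)| ≤ R_max for all s and a, such that, writing N = ⌊(H − 1)/(k + 1)⌋: (i) every k-lookahead policy π_k with u-tiebreaking satisfies R_H(π_k, s₀) = 0; (ii) there exists a policy π* with R_H(π*, s₀) = N · R_max; and (iii) the truncated lookahead values of all available actions coincide at every decision state visited by π_k (namely Q̃_k(s, a) = 0 for all actions a at each such state s), so that action selection at those states is determined entirely by the tie-breaking score u. -/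
/-!
From a waiting state an agent may stay put for free or enter a cycle of length `k + 1` that
pays `Rmax` once per lap. The first payment comes `k + 1` steps after the waiting state, one step
beyond what a `k`-step lookahead sees, so every action at the waiting state has truncated value
`0` and a tie-breaking score favouring "stay" traps the lookahead policy there forever with
return `0`. Entering the cycle at once collects `Rmax` at every time `t ∈ (0, H)` divisible by
`k + 1`, that is `⌊(H - 1)/(k + 1)⌋` times.
-/

section Environment

variable {S A : Type*} (T : S → A → S)

theorem traj_succ (π : S → A) (s₀ : S) (t : ℕ) :
    traj T π s₀ (t + 1) = T (traj T π s₀ t) (π (traj T π s₀ t)) :=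
  rfl

theorem traj_eq_of_fixed_s5 {π : S → A} {s : S} (hs : T s (π s) = s) (t : ℕ) :
    traj T π s t = s := by
  induction t with
  | zero => rfl
  | succ t ih => rw [traj_succ, ih, hs]

variable [Fintype A] [Nonempty A] (r : S → A → ℝ)

theorem Qtil_succ_eq_zero {j : ℕ} {s : S} {a : A} (hr : r s a = 0)
    (hnext : ∀ a', Qtil T r j (T s a) a' = 0) : Qtil T r (j + 1) s a = 0 := by
  simp only [Qtil, hr, hnext, Finset.sup'_const, add_zero]

end Environment

namespace LookaheadTrap

variable (k : ℕ)

/-- `none` is the waiting state; `some i` is cell `i` of the rewarding cycle. -/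
abbrev State : Type := Option (ZMod (k + 1))

def step : State k → Bool → State k
  | none, enter => if enter then some 1 else none
  | some i, _ => some (i + 1)

noncomputable def reward (Rmax : ℝ) : State k → Bool → ℝ :=
  fun s _ => if s = some 0 then Rmax else 0

def score : State k → Bool → ℝ := fun _ enter => if enter then 0 else 1

variable {k} {Rmax : ℝ}

theorem abs_reward_le (hR : 0 ≤ Rmax) (s : State k) (a : Bool) : |reward k Rmax s a| ≤ Rmax := by
  unfold reward
  split_ifs
  · exact (abs_of_nonneg hR).le
  · simpa using hR

theorem reward_cell (n : ℕ) (a : Bool) :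
    reward k Rmax (some n) a = if (k + 1) ∣ n then Rmax else 0 := by
  simp only [reward, Option.some_inj, ZMod.natCast_eq_zero_iff]

theorem Qtil_cell (a : Bool) :
    ∀ j n : ℕ, 1 ≤ n → n + j ≤ k + 1 → Qtil (step k) (reward k Rmax) j (some n) a = 0
  | 0, _, _, _ => rfl
  | j + 1, n, hn, hnj => by
    refine Qtil_succ_eq_zero _ _ ?_ fun a' => ?_
    · rw [reward_cell, if_neg (Nat.not_dvd_of_pos_of_lt hn (by omega))]
    · simpa [step] using Qtil_cell a' j (n + 1) (by omega) (by omega)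

theorem Qtil_wait :
    ∀ j ≤ k + 1, ∀ a : Bool, Qtil (step k) (reward k Rmax) j none a = 0
  | 0, _, _ => rfl
  | j + 1, hj, a => by
    refine Qtil_succ_eq_zero _ _ rfl fun a' => ?_
    cases a
    · exact Qtil_wait j (by omega) a'
    · simpa [step] using Qtil_cell a' j 1 le_rfl (by omega)

theorem traj_enter (t : ℕ) :
    traj (step k) (fun _ => true) none (t + 1) = some ((t + 1 : ℕ) : ZMod (k + 1)) := by
  induction t with
  | zero => simp [traj, step]
  | succ t ih => rw [traj_succ, ih]; simp [step]

theorem reward_traj_enter (t : ℕ) :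
    reward k Rmax (traj (step k) (fun _ => true) none t) true
      = if t ≠ 0 ∧ (k + 1) ∣ t then Rmax else 0 := by
  cases t with
  | zero => rfl
  | succ t => rw [traj_enter, reward_cell]; simp

theorem ret_enter (M : ℕ) :
    ret (step k) (reward k Rmax) (fun _ => true) none (M + 1) = (M / (k + 1) : ℕ) * Rmax := by
  simp only [ret, reward_traj_enter, ← Finset.sum_filter, Finset.sum_const, nsmul_eq_mul,
    Nat.card_multiples']

end LookaheadTrap

open LookaheadTrap in
/-- **Exact return computations for the truncated-lookahead lower bound.**
For every horizon `H`, depth `k` with `1 ≤ k ≤ H - 1`, and `R_max > 0`, there is a finite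
deterministic environment with rewards bounded by `R_max`, such that with
`N = ⌊(H - 1)/(k + 1)⌋`: (i) every `k`-lookahead policy with `u`-tiebreaking attains
return `0`; (ii) some policy attains return exactly `N · R_max`; and (iii) along the
trajectory of any such `k`-lookahead policy the truncated lookahead values of all actions
vanish, so selection there is decided entirely by the tie-breaking score `u`. -/
theorem truncated_lookahead_exact_returns :
    ∀ H k : ℕ, 1 ≤ k → k ≤ H - 1 → ∀ Rmax : ℝ, 0 < Rmax →
    ∃ (S A : Type) (_ : Fintype S) (iA : Fintype A) (nA : Nonempty A)
      (T : S → A → S) (r : S → A → ℝ) (u : S → A → ℝ) (s₀ : S),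
      (∀ s a, |r s a| ≤ Rmax) ∧
      (∀ πk : S → A,
        (∀ s a, @Qtil S A iA nA T r k s a ≤ @Qtil S A iA nA T r k s (πk s) ∧
          (@Qtil S A iA nA T r k s a = @Qtil S A iA nA T r k s (πk s) →
            u s a ≤ u s (πk s))) →
        ret T r πk s₀ H = 0 ∧
        ∀ t < H, ∀ a, @Qtil S A iA nA T r k (traj T πk s₀ t) a = 0) ∧
      (∃ π' : S → A,
        ret T r π' s₀ H = (((H - 1) / (k + 1) : ℕ) : ℝ) * Rmax) := by
  intro H k _ hkH Rmax hR
  refine ⟨State k, Bool, inferInstance, inferInstance, inferInstance, step k, reward k Rmax,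
    score k, none, abs_reward_le hR.le, fun πk hπk => ?_, ⟨fun _ => true, ?_⟩⟩
  · have hQ : ∀ a, Qtil (step k) (reward k Rmax) k none a = 0 := Qtil_wait k (by omega)
    have hwait : πk none = false := by
      have hscore := (hπk none false).2 (by rw [hQ, hQ])
      cases h : πk none
      · rfl
      · norm_num [score, h] at hscore
    have htraj := traj_eq_of_fixed_s5 (step k) (π := πk) (s := none) (by simp [step, hwait])
    refine ⟨Finset.sum_eq_zero fun t _ => ?_, fun t _ => ?_⟩
    · rw [htraj]; rfl
    · rw [htraj]; exact hQ
  · obtain ⟨M, rfl⟩ : ∃ M, H = M + 1 := ⟨H - 1, by omega⟩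
    simpa using ret_enter M
end
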